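/- arXiv:1306.4967 — 2 statements merged into one kernel-verified Lean document; each statement's English description precedes it below -/
import Mathlib

section
/- The operators Λ commute: for ℏ > 0, N ≥ 3, and real λ, μ, one has ∫_{ℝ^{N−1}} Λ^{(N)}_λ(x_N | z_{N−1}) · Λ^{(N−1)}_μ(z_{N−1} | x'_{N−2}) d^{N−1}z = ∫_{ℝ^{N−1}} Λ^{(N)}_μ(x_N | z_{N−1}) · Λ^{(N−1)}_λ(z_{N−1} | x'_{N−2}) d^{N−1}z for all x ∈ ℝ^N and x' ∈ ℝ^{N−2}. -/
/-!
Write each kernel as `exp ((-E + i λ (Σ x - Σ τ)) / ℏ)` with a real "energy" `E`. In the product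
`Λ_λ(x | z) Λ_μ(z | x')` every `z_k` enters the energy only through `a_k e^{z_k} + b_k e^{-z_k}`
with `a_k, b_k > 0`, so the measure-preserving involution `z_k ↦ log (b_k / a_k) - z_k` fixes the
energy. The centres telescope, `Σ_k log (b_k / a_k) = Σ x + Σ x'`, and with this the involution
turns the phase `λ (Σ x - Σ z) + μ (Σ z - Σ x')` into the one with `λ` and `μ` exchanged.
-/

open MeasureTheory Real Complex

noncomputable def Vplus (ℏ : ℝ) (lam : ℂ) (x : ℝ) : ℂ :=
  Complex.exp (↑(-(1 / ℏ) * Real.exp x) + Complex.I * lam * ↑x / (2 * ↑ℏ))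

noncomputable def Vminus (ℏ : ℝ) (lam : ℂ) (x : ℝ) : ℂ :=
  Complex.exp (↑(-(1 / ℏ) * Real.exp (-x)) + Complex.I * lam * ↑x / (2 * ↑ℏ))

/-- The kernel `Λ^{(n+2)}_y(x | τ)` of the raising operator. -/
noncomputable def LamKer (ℏ : ℝ) (n : ℕ) (y : ℂ) (x : Fin (n + 2) → ℝ)
    (τ : Fin (n + 1) → ℝ) : ℂ :=
  Complex.exp (Complex.I * y / (2 * ↑ℏ) * (↑(x 0) + ↑(x (Fin.last (n + 1)))))
    * (∏ k : Fin (n + 1), Vminus ℏ y (x k.castSucc - τ k))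
    * ∏ k : Fin (n + 1), Vplus ℏ y (x k.succ - τ k)

theorem exp_neg_add_exp_neg (a b : ℝ) :
    Real.exp (-a) + Real.exp (-b) = Real.exp (-(a + b)) * (Real.exp a + Real.exp b) := by
  rw [mul_add, ← Real.exp_add, ← Real.exp_add]
  ring_nf

theorem mul_exp_log_div_sub_add_mul_exp_neg {a b : ℝ} (ha : 0 < a) (hb : 0 < b) (z : ℝ) :
    a * Real.exp (Real.log (b / a) - z) + b * Real.exp (-(Real.log (b / a) - z))
      = a * Real.exp z + b * Real.exp (-z) := by
  rw [neg_sub, Real.exp_sub, Real.exp_sub, Real.exp_neg, Real.exp_log (div_pos hb ha)]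
  field_simp
  ring

noncomputable def expPotential {ι : Type*} [Fintype ι] (a b z : ι → ℝ) : ℝ :=
  ∑ k, (a k * Real.exp (z k) + b k * Real.exp (-z k))

theorem expPotential_log_div_sub {ι : Type*} [Fintype ι] {a b : ι → ℝ} (ha : ∀ k, 0 < a k)
    (hb : ∀ k, 0 < b k) (z : ι → ℝ) :
    expPotential a b (fun k => Real.log (b k / a k) - z k) = expPotential a b z :=
  Finset.sum_congr rfl fun k _ => mul_exp_log_div_sub_add_mul_exp_neg (ha k) (hb k) (z k)

noncomputable def lamKerEnergy {n : ℕ} (x : Fin (n + 2) → ℝ) (τ : Fin (n + 1) → ℝ) : ℝ :=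
  ∑ k : Fin (n + 1), (Real.exp (τ k - x k.castSucc) + Real.exp (x k.succ - τ k))

theorem LamKer_ofReal_eq_exp (ℏ : ℝ) (n : ℕ) (lam : ℝ) (x : Fin (n + 2) → ℝ)
    (τ : Fin (n + 1) → ℝ) :
    LamKer ℏ n lam x τ
      = Complex.exp (↑(-lamKerEnergy x τ / ℏ) + I * ↑(lam * (∑ i, x i - ∑ k, τ k) / ℏ)) := by
  have hx_castSucc : ∑ i, (x i : ℂ) = ∑ k : Fin (n + 1), (x k.castSucc : ℂ) + x (Fin.last _) :=
    Fin.sum_univ_castSucc _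
  have hx_succ : ∑ i, (x i : ℂ) = x 0 + ∑ k : Fin (n + 1), (x k.succ : ℂ) :=
    Fin.sum_univ_succ _
  unfold LamKer Vminus Vplus lamKerEnergy
  rw [← Complex.exp_sum, ← Complex.exp_sum, ← Complex.exp_add, ← Complex.exp_add]
  congr 1
  simp only [Finset.sum_add_distrib, neg_sub]
  push_cast
  simp only [← Finset.sum_div, ← Finset.mul_sum, Finset.sum_sub_distrib]
  linear_combination -I * lam / (2 * ℏ) * (hx_castSucc + hx_succ)

section Coefficients

variable {n : ℕ} (x : Fin (n + 3) → ℝ) (x' : Fin (n + 1) → ℝ)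

noncomputable def coeffExp (k : Fin (n + 2)) : ℝ :=
  Real.exp (-x k.castSucc) + (Fin.cons 0 (fun j => Real.exp (-x' j)) : Fin (n + 2) → ℝ) k

noncomputable def coeffExpNeg (k : Fin (n + 2)) : ℝ :=
  Real.exp (x k.succ) + (Fin.snoc (fun j => Real.exp (x' j)) 0 : Fin (n + 2) → ℝ) k

theorem coeffExp_pos (k : Fin (n + 2)) : 0 < coeffExp x x' k := by
  cases k using Fin.cases <;> simp only [coeffExp, Fin.cons_zero, Fin.cons_succ] <;> positivity

theorem coeffExpNeg_pos (k : Fin (n + 2)) : 0 < coeffExpNeg x x' k := by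
  cases k using Fin.lastCases <;> simp only [coeffExpNeg, Fin.snoc_last, Fin.snoc_castSucc] <;>
    positivity

theorem lamKerEnergy_add_lamKerEnergy (z : Fin (n + 2) → ℝ) :
    lamKerEnergy x z + lamKerEnergy z x' = expPotential (coeffExp x x') (coeffExpNeg x x') z := by
  have hcons : ∑ k, (Fin.cons 0 (fun j => Real.exp (-x' j)) : Fin (n + 2) → ℝ) k * Real.exp (z k)
      = ∑ j, Real.exp (z j.succ - x' j) := by
    simp [Fin.sum_univ_succ, ← Real.exp_add, sub_eq_neg_add]
  have hsnoc : ∑ k, (Fin.snoc (fun j => Real.exp (x' j)) 0 : Fin (n + 2) → ℝ) k * Real.exp (-z k)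
      = ∑ j, Real.exp (x' j - z j.castSucc) := by
    simp [Fin.sum_univ_castSucc, ← Real.exp_add, sub_eq_add_neg]
  unfold lamKerEnergy expPotential coeffExp coeffExpNeg
  simp only [add_mul, Finset.sum_add_distrib, hcons, hsnoc, ← Real.exp_add]
  simp only [sub_eq_add_neg, add_comm]
  ring

theorem coeffExp_succ (j : Fin (n + 1)) :
    coeffExp x x' j.succ
      = Real.exp (-(x j.succ.castSucc + x' j)) * coeffExpNeg x x' j.castSucc := by
  rw [coeffExp, coeffExpNeg, Fin.cons_succ, Fin.snoc_castSucc, Fin.succ_castSucc]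
  exact exp_neg_add_exp_neg _ _

noncomputable def reflectionCenter (k : Fin (n + 2)) : ℝ :=
  Real.log (coeffExpNeg x x' k / coeffExp x x' k)

theorem sum_reflectionCenter : ∑ k, reflectionCenter x x' k = ∑ i, x i + ∑ j, x' j := by
  have hlog_succ (j : Fin (n + 1)) : Real.log (coeffExp x x' j.succ)
      = Real.log (coeffExpNeg x x' j.castSucc) - x j.succ.castSucc - x' j := by
    rw [coeffExp_succ, Real.log_mul (Real.exp_ne_zero _) (coeffExpNeg_pos x x' _).ne',
      Real.log_exp]
    ring
  have hlog_zero : Real.log (coeffExp x x' 0) = -x 0 := by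
    simp [coeffExp]
  have hlog_last : Real.log (coeffExpNeg x x' (Fin.last _)) = x (Fin.last _) := by
    simp [coeffExpNeg]
  have hx : ∑ i, x i = x 0 + (∑ j : Fin (n + 1), x j.succ.castSucc + x (Fin.last _)) := by
    rw [Fin.sum_univ_succ, Fin.sum_univ_castSucc (fun k : Fin (n + 2) => x k.succ)]
    simp only [Fin.succ_castSucc, Fin.succ_last]
  simp only [reflectionCenter, Finset.sum_sub_distrib,
    Real.log_div (coeffExpNeg_pos x x' _).ne' (coeffExp_pos x x' _).ne']
  rw [Fin.sum_univ_castSucc (fun k => Real.log (coeffExpNeg x x' k)),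
    Fin.sum_univ_succ (fun k => Real.log (coeffExp x x' k)), hlog_zero, hlog_last, hx]
  simp only [hlog_succ, Finset.sum_sub_distrib]
  ring

theorem LamKer_mul_LamKer_reflectionCenter_sub (ℏ lam mu : ℝ) (z : Fin (n + 2) → ℝ) :
    LamKer ℏ (n + 1) lam x (reflectionCenter x x' - z)
        * LamKer ℏ n mu (reflectionCenter x x' - z) x'
      = LamKer ℏ (n + 1) mu x z * LamKer ℏ n lam z x' := by
  have henergy : lamKerEnergy x (reflectionCenter x x' - z)
        + lamKerEnergy (reflectionCenter x x' - z) x'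
      = lamKerEnergy x z + lamKerEnergy z x' := by
    rw [lamKerEnergy_add_lamKerEnergy, lamKerEnergy_add_lamKerEnergy]
    exact expPotential_log_div_sub (coeffExp_pos x x') (coeffExpNeg_pos x x') z
  have hsum : ∑ k, (reflectionCenter x x' - z) k = ∑ i, x i + ∑ j, x' j - ∑ k, z k := by
    rw [← sum_reflectionCenter, ← Finset.sum_sub_distrib]
    rfl
  simp only [LamKer_ofReal_eq_exp, ← Complex.exp_add]
  congr 1
  have henergy' := congrArg ((↑) : ℝ → ℂ) henergy
  have hsum' := congrArg ((↑) : ℝ → ℂ) hsum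
  push_cast at henergy' hsum' ⊢
  linear_combination (-1 / ℏ : ℂ) * henergy' + I * (mu - lam) / ℏ * hsum'

end Coefficients

theorem lam_commute_general (ℏ : ℝ) (n : ℕ) (lam mu : ℝ)
    (x : Fin (n + 3) → ℝ) (x' : Fin (n + 1) → ℝ) :
    (∫ z : Fin (n + 2) → ℝ, LamKer ℏ (n + 1) (↑lam) x z * LamKer ℏ n (↑mu) z x')
      = ∫ z : Fin (n + 2) → ℝ, LamKer ℏ (n + 1) (↑mu) x z * LamKer ℏ n (↑lam) z x' := by
  rw [← integral_sub_left_eq_self _ volume (reflectionCenter x x')]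
  exact integral_congr_ae (.of_forall (LamKer_mul_LamKer_reflectionCenter_sub x x' ℏ lam mu))

/-- The operators `Λ` commute: for `N = n+3 ≥ 3` and real `λ, μ`,
`∫ Λ^{(N)}_λ(x|z) Λ^{(N-1)}_μ(z|x') d^{N-1}z = ∫ Λ^{(N)}_μ(x|z) Λ^{(N-1)}_λ(z|x') d^{N-1}z`. -/
theorem lam_commute (ℏ : ℝ) (hℏ : 0 < ℏ) (n : ℕ) (lam mu : ℝ)
    (x : Fin (n + 3) → ℝ) (x' : Fin (n + 1) → ℝ) :
    (∫ z : Fin (n + 2) → ℝ, LamKer ℏ (n + 1) (↑lam) x z * LamKer ℏ n (↑mu) z x')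
      = ∫ z : Fin (n + 2) → ℝ, LamKer ℏ (n + 1) (↑mu) x z * LamKer ℏ n (↑lam) z x' :=
  lam_commute_general ℏ n lam mu x x'
end

section
/- Exchange relation between ℒ and Λ operators: for ℏ > 0, N ≥ 3, and complex y, w with Im(y) > Im(w), the composition ℒ^{(N−1)}_y · Λ^{(N−1)}_w is well-defined and equals ℏ^{(i/ℏ)(w−y)} · Γ((y − w)/(iℏ)) · Λ^{(N−1)}_w · ℒ^{(N−2)}_y, as an identity of integral kernels. -/
open MeasureTheory Real Complex

/-- The kernel `ℒ^{(m+1)}_y(x | τ)`. -/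
noncomputable def LKer (ℏ : ℝ) (m : ℕ) (y : ℂ) (x τ : Fin (m + 1) → ℝ) : ℂ :=
  Complex.exp (Complex.I * y / (2 * ↑ℏ) * (↑(x 0) - ↑(τ (Fin.last m))))
    * (∏ k : Fin (m + 1), Vminus ℏ y (x k - τ k))
    * ∏ k : Fin m, Vplus ℏ y (x k.succ - τ k.castSucc)


/-!
In exponential form both compositions factor into a phase depending only on the external
variables `x, z` times a product of one-dimensional integrands `exp(-(a e^t + b e^{-t}) + μ t)`,
with the same coefficients `a_j, b_j` on both sides and `μ = ± i(w - y)/ℏ`; on the left there is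
one extra variable, whose coefficient `b` vanishes. That integral is `(ℏ / a)^μ Γ(μ)` by `u = e^t`.
Every other one equals `(b_j / a_j)^μ` times its counterpart with `-μ`, by the reflection
`t ↦ log (b_j / a_j) - t`. The ratios `b_j / a_j` telescope to `e^{Σ x + Σ z} a_last`, which
turns the left phase into the right one and leaves the factor `ℏ^μ`.
-/

section ExpSubstitution

variable {E : Type*} [NormedAddCommGroup E] [NormedSpace ℝ E]

theorem integrable_exp_smul_comp_exp_iff (g : ℝ → E) :
    Integrable (fun t => rexp t • g (rexp t)) ↔ IntegrableOn g (Set.Ioi 0) := by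
  have := integrableOn_image_iff_integrableOn_abs_deriv_smul MeasurableSet.univ
    (fun t _ => (Real.hasDerivAt_exp t).hasDerivWithinAt) Real.exp_injective.injOn g
  simpa [Real.range_exp, abs_of_pos (Real.exp_pos _)] using this.symm

theorem integral_exp_smul_comp_exp (g : ℝ → E) :
    ∫ t, rexp t • g (rexp t) = ∫ u in Set.Ioi 0, g u := by
  have := integral_image_eq_integral_abs_deriv_smul MeasurableSet.univ
    (fun t _ => (Real.hasDerivAt_exp t).hasDerivWithinAt) Real.exp_injective.injOn g
  simpa [Real.range_exp, abs_of_pos (Real.exp_pos _)] using this.symm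

end ExpSubstitution

theorem integrableOn_cpow_mul_exp_neg_mul_Ioi {a : ℂ} {r : ℝ} (ha : 0 < a.re) (hr : 0 < r) :
    IntegrableOn (fun t : ℝ => (t : ℂ) ^ (a - 1) * cexp (-(r * t))) (Set.Ioi 0) := by
  refine (integrableOn_rpow_mul_exp_neg_mul_rpow (p := 1) (s := a.re - 1) (by linarith) one_pos
    hr).mono' (by fun_prop) ?_
  filter_upwards [ae_restrict_mem measurableSet_Ioi] with t ht
  rw [norm_mul, norm_cpow_eq_rpow_re_of_pos ht, Complex.norm_exp, Real.rpow_one]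
  simp

noncomputable def besselKIntegrand (a b : ℝ) (μ : ℂ) (t : ℝ) : ℂ :=
  cexp (↑(-(a * rexp t + b * rexp (-t))) + μ * ↑t)

theorem besselKIntegrand_zero_eq (c : ℝ) (μ : ℂ) (t : ℝ) :
    besselKIntegrand c 0 μ t = rexp t • ((rexp t : ℂ) ^ (μ - 1) * cexp (-(c * rexp t))) := by
  rw [cpow_def_of_ne_zero (ofReal_ne_zero.mpr (Real.exp_pos t).ne'),
    ← ofReal_log (Real.exp_pos t).le, Real.log_exp, real_smul, ofReal_exp, ← Complex.exp_add,
    ← Complex.exp_add, besselKIntegrand]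
  push_cast
  ring_nf

theorem integrable_besselKIntegrand_zero {c : ℝ} {μ : ℂ} (hc : 0 < c) (hμ : 0 < μ.re) :
    Integrable (besselKIntegrand c 0 μ) :=
  ((integrable_exp_smul_comp_exp_iff _).mpr (integrableOn_cpow_mul_exp_neg_mul_Ioi hμ hc)).congr
    (.of_forall fun t => (besselKIntegrand_zero_eq c μ t).symm)

theorem integral_besselKIntegrand_zero {c : ℝ} {μ : ℂ} (hc : 0 < c) (hμ : 0 < μ.re) :
    ∫ t, besselKIntegrand c 0 μ t = cexp (-(μ * Real.log c)) * Gamma μ := by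
  have hc' : (1 / c : ℂ) ≠ 0 := by simpa using hc.ne'
  rw [integral_congr_ae (.of_forall (besselKIntegrand_zero_eq c μ)),
    integral_exp_smul_comp_exp (fun u : ℝ => (u : ℂ) ^ (μ - 1) * cexp (-(c * u))),
    integral_cpow_mul_exp_neg_mul_Ioi hμ hc, cpow_def_of_ne_zero hc', one_div, ← ofReal_inv,
    ← ofReal_log (inv_nonneg.mpr hc.le), Real.log_inv]
  push_cast
  ring_nf

theorem norm_besselKIntegrand_le {b : ℝ} (a : ℝ) (hb : 0 ≤ b) (μ : ℂ) (t : ℝ) :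
    ‖besselKIntegrand a b μ t‖ ≤ ‖besselKIntegrand a 0 μ t‖ := by
  simp only [besselKIntegrand, Complex.norm_exp, add_re, ofReal_re, Real.exp_le_exp]
  nlinarith [Real.exp_pos (-t)]

theorem integrable_besselKIntegrand {a b : ℝ} {μ : ℂ} (ha : 0 < a) (hb : 0 ≤ b)
    (hμ : 0 < μ.re) : Integrable (besselKIntegrand a b μ) :=
  (integrable_besselKIntegrand_zero ha hμ).mono (by unfold besselKIntegrand; fun_prop)
    (.of_forall (norm_besselKIntegrand_le a hb μ))

theorem integral_besselKIntegrand_neg {a b : ℝ} (ha : 0 < a) (hb : 0 < b) (μ : ℂ) :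
    ∫ t, besselKIntegrand a b μ t
      = cexp (μ * Real.log (b / a)) * ∫ t, besselKIntegrand a b (-μ) t := by
  have reflect (t : ℝ) : besselKIntegrand a b μ (Real.log (b / a) - t)
      = cexp (μ * Real.log (b / a)) * besselKIntegrand a b (-μ) t := by
    have e₁ : rexp (Real.log (b / a) - t) = b / a * rexp (-t) := by
      rw [Real.exp_sub, Real.exp_log (div_pos hb ha), Real.exp_neg, div_eq_mul_inv]
    have e₂ : rexp (-(Real.log (b / a) - t)) = a / b * rexp t := by
      rw [neg_sub, Real.exp_sub, Real.exp_log (div_pos hb ha)]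
      field_simp
    have ha' : (a : ℂ) ≠ 0 := ofReal_ne_zero.mpr ha.ne'
    have hb' : (b : ℂ) ≠ 0 := ofReal_ne_zero.mpr hb.ne'
    rw [besselKIntegrand, besselKIntegrand, ← Complex.exp_add, e₁, e₂]
    congr 1
    push_cast
    field_simp
    ring
  rw [← integral_sub_left_eq_self _ volume (Real.log (b / a))]
  simp_rw [reflect]
  exact integral_const_mul _ _

theorem prod_besselKIntegrand {ι : Type*} [Fintype ι] (a b : ι → ℝ) (μ : ℂ) (t : ι → ℝ) :
    ∏ i, besselKIntegrand (a i) (b i) μ (t i)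
      = cexp (-↑(∑ i, (a i * rexp (t i) + b i * rexp (-t i))) + μ * ↑(∑ i, t i)) := by
  simp only [besselKIntegrand, ← Complex.exp_sum]
  push_cast
  rw [Finset.sum_add_distrib, Finset.mul_sum, Finset.sum_neg_distrib]

theorem Vminus_eq_exp (ℏ : ℝ) (lam : ℂ) (u : ℝ) :
    Vminus ℏ lam u = cexp (-(rexp (-u) / ℏ : ℂ) + I * lam / (2 * ℏ) * u) := by
  rw [Vminus]
  push_cast
  ring_nf

theorem Vplus_eq_exp (ℏ : ℝ) (lam : ℂ) (u : ℝ) :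
    Vplus ℏ lam u = cexp (-(rexp u / ℏ : ℂ) + I * lam / (2 * ℏ) * u) := by
  rw [Vplus]
  push_cast
  ring_nf

theorem sum_sub_add_sum_succ_sub_castSucc {m : ℕ} (x τ : Fin (m + 1) → ℝ) :
    ∑ k, (x k - τ k) + ∑ k : Fin m, (x k.succ - τ k.castSucc) + (x 0 - τ (Fin.last m))
      = 2 * (∑ k, x k - ∑ k, τ k) := by
  rw [Fin.sum_univ_succ x, Fin.sum_univ_castSucc τ, Finset.sum_sub_distrib,
    Finset.sum_sub_distrib, Fin.sum_univ_succ x, Fin.sum_univ_castSucc τ]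
  ring

theorem sum_castSucc_sub_add_sum_succ_sub {n : ℕ} (x : Fin (n + 2) → ℝ) (τ : Fin (n + 1) → ℝ) :
    (x 0 + x (Fin.last (n + 1))) + ∑ k, (x k.castSucc - τ k) + ∑ k, (x k.succ - τ k)
      = 2 * (∑ k, x k - ∑ k, τ k) := by
  rw [Finset.sum_sub_distrib, Finset.sum_sub_distrib, two_mul, ← add_sub_assoc]
  nth_rw 1 [Fin.sum_univ_castSucc x]
  rw [Fin.sum_univ_succ x]
  ring

theorem LKer_eq_exp (ℏ : ℝ) (m : ℕ) (y : ℂ) (x τ : Fin (m + 1) → ℝ) :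
    LKer ℏ m y x τ = cexp (-(↑(∑ k, rexp (τ k - x k)
        + ∑ k : Fin m, rexp (x k.succ - τ k.castSucc)) / ℏ)
      + I * y / ℏ * ↑(∑ k, x k - ∑ k, τ k)) := by
  simp only [LKer, Vminus_eq_exp, Vplus_eq_exp, ← Complex.exp_sum, ← Complex.exp_add,
    Finset.sum_add_distrib, Finset.sum_neg_distrib, ← Finset.sum_div, ← Finset.mul_sum,
    ← ofReal_sum, neg_sub]
  congr 1
  have h := congrArg ((↑) : ℝ → ℂ) (sum_sub_add_sum_succ_sub_castSucc x τ)
  push_cast at h ⊢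
  linear_combination I * y / (2 * ℏ) * h

theorem LamKer_eq_exp (ℏ : ℝ) (n : ℕ) (y : ℂ) (x : Fin (n + 2) → ℝ) (τ : Fin (n + 1) → ℝ) :
    LamKer ℏ n y x τ = cexp (-(↑(∑ k, rexp (τ k - x k.castSucc)
        + ∑ k, rexp (x k.succ - τ k)) / ℏ)
      + I * y / ℏ * ↑(∑ k, x k - ∑ k, τ k)) := by
  simp only [LamKer, Vminus_eq_exp, Vplus_eq_exp, ← Complex.exp_sum, ← Complex.exp_add,
    Finset.sum_add_distrib, Finset.sum_neg_distrib, ← Finset.sum_div, ← Finset.mul_sum,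
    ← ofReal_sum, neg_sub]
  congr 1
  have h := congrArg ((↑) : ℝ → ℂ) (sum_castSucc_sub_add_sum_succ_sub x τ)
  push_cast at h ⊢
  linear_combination I * y / (2 * ℏ) * h

/-- `expCoef x z j` and `expNegCoef x z j` are the coefficients of `-e^{τ_j} / ℏ` and
`-e^{-τ_j} / ℏ` in the exponent of `ℒ_y(x | τ) Λ_w(τ | z)`. -/
noncomputable def expCoef {m : ℕ} (x : Fin (m + 2) → ℝ) (z : Fin (m + 1) → ℝ) :
    Fin (m + 2) → ℝ :=
  Fin.cases (rexp (-x 0)) fun k => rexp (-x k.succ) + rexp (-z k)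

noncomputable def expNegCoef {m : ℕ} (x : Fin (m + 2) → ℝ) (z : Fin (m + 1) → ℝ) :
    Fin (m + 2) → ℝ :=
  Fin.lastCases 0 fun k => rexp (x k.succ) + rexp (z k)

theorem Fin.sum_succ_sub_castSucc {M : Type*} [AddCommGroup M] {n : ℕ} (f : Fin (n + 1) → M) :
    ∑ k : Fin n, (f k.succ - f k.castSucc) = f (Fin.last n) - f 0 := by
  rw [Finset.sum_sub_distrib, sub_eq_sub_iff_add_eq_add, add_comm _ (f 0), ← Fin.sum_univ_succ,
    add_comm (f _), ← Fin.sum_univ_castSucc]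

section Coefficients

variable {m : ℕ} (x : Fin (m + 2) → ℝ) (z : Fin (m + 1) → ℝ)

theorem sum_expCoef_add_expNegCoef (τ : Fin (m + 2) → ℝ) :
    ∑ j, (expCoef x z j * rexp (τ j) + expNegCoef x z j * rexp (-τ j))
      = (∑ k, rexp (τ k - x k) + ∑ k : Fin (m + 1), rexp (x k.succ - τ k.castSucc))
        + (∑ k, rexp (z k - τ k.castSucc) + ∑ k, rexp (τ k.succ - z k)) := by
  rw [Finset.sum_add_distrib, Fin.sum_univ_succ (fun j => expCoef x z j * _),
    Fin.sum_univ_castSucc (fun j => expNegCoef x z j * _),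
    Fin.sum_univ_succ (fun k => rexp (τ k - x k))]
  simp only [expCoef, expNegCoef, Fin.cases_zero, Fin.cases_succ, Fin.lastCases_last,
    Fin.lastCases_castSucc, add_mul, ← Real.exp_add, neg_add_eq_sub, ← sub_eq_add_neg,
    Finset.sum_add_distrib, zero_mul, add_zero]
  ring

theorem sum_expCoef_castSucc_add_expNegCoef (σ : Fin (m + 1) → ℝ) :
    ∑ k, (expCoef x z k.castSucc * rexp (σ k) + expNegCoef x z k.castSucc * rexp (-σ k))
      = (∑ k, rexp (σ k - x k.castSucc) + ∑ k, rexp (x k.succ - σ k))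
        + (∑ k, rexp (z k - σ k) + ∑ k : Fin m, rexp (σ k.succ - z k.castSucc)) := by
  rw [Finset.sum_add_distrib, Fin.sum_univ_succ (fun k => expCoef x z k.castSucc * _),
    Fin.sum_univ_succ (fun k => rexp (σ k - x k.castSucc))]
  simp only [expCoef, expNegCoef, Fin.castSucc_zero, Fin.cases_zero, ← Fin.succ_castSucc,
    Fin.cases_succ, Fin.lastCases_castSucc, add_mul, ← Real.exp_add, neg_add_eq_sub,
    ← sub_eq_add_neg, Finset.sum_add_distrib]
  ring

theorem expCoef_pos (j : Fin (m + 2)) : 0 < expCoef x z j := by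
  cases j using Fin.cases <;> simp only [expCoef, Fin.cases_zero, Fin.cases_succ] <;> positivity

theorem expNegCoef_last : expNegCoef x z (Fin.last (m + 1)) = 0 := Fin.lastCases_last

theorem expNegCoef_castSucc (k : Fin (m + 1)) :
    expNegCoef x z k.castSucc = rexp (x k.succ + z k) * expCoef x z k.succ := by
  simp only [expNegCoef, Fin.lastCases_castSucc, expCoef, Fin.cases_succ, mul_add,
    ← Real.exp_add]
  ring_nf

theorem expNegCoef_castSucc_pos (k : Fin (m + 1)) : 0 < expNegCoef x z k.castSucc := by
  rw [expNegCoef_castSucc]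
  exact mul_pos (Real.exp_pos _) (expCoef_pos x z _)

theorem expNegCoef_nonneg (j : Fin (m + 2)) : 0 ≤ expNegCoef x z j := by
  cases j using Fin.lastCases with
  | last => rw [expNegCoef_last]
  | cast k => exact (expNegCoef_castSucc_pos x z k).le

theorem sum_log_expNegCoef_div_expCoef :
    ∑ k : Fin (m + 1), Real.log (expNegCoef x z k.castSucc / expCoef x z k.castSucc)
      = ∑ k, x k + ∑ k, z k + Real.log (expCoef x z (Fin.last (m + 1))) := by
  have hlog (k : Fin (m + 1)) : Real.log (expNegCoef x z k.castSucc / expCoef x z k.castSucc)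
      = x k.succ + z k + (Real.log (expCoef x z k.succ) - Real.log (expCoef x z k.castSucc)) := by
    rw [Real.log_div (expNegCoef_castSucc_pos x z k).ne' (expCoef_pos x z _).ne',
      expNegCoef_castSucc, Real.log_mul (Real.exp_ne_zero _) (expCoef_pos x z _).ne',
      Real.log_exp]
    ring
  rw [Finset.sum_congr rfl fun k _ => hlog k, Finset.sum_add_distrib, Finset.sum_add_distrib,
    Fin.sum_succ_sub_castSucc (fun j => Real.log (expCoef x z j)), Fin.sum_univ_succ x]
  simp only [expCoef, Fin.cases_zero, Real.log_exp]
  ring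

theorem LKer_mul_LamKer_eq (ℏ : ℝ) (y w : ℂ) (τ : Fin (m + 2) → ℝ) :
    LKer ℏ (m + 1) y x τ * LamKer ℏ m w τ z
      = cexp (I / ℏ * (y * ↑(∑ k, x k) - w * ↑(∑ k, z k))) * ∏ j,
          besselKIntegrand (expCoef x z j / ℏ) (expNegCoef x z j / ℏ) (I * (w - y) / ℏ) (τ j) := by
  have hE : ∑ j, (expCoef x z j / ℏ * rexp (τ j) + expNegCoef x z j / ℏ * rexp (-τ j))
      = (∑ j, (expCoef x z j * rexp (τ j) + expNegCoef x z j * rexp (-τ j))) / ℏ := by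
    simp only [Finset.sum_div, add_div, div_mul_eq_mul_div]
  rw [LKer_eq_exp, LamKer_eq_exp, prod_besselKIntegrand, ← Complex.exp_add, ← Complex.exp_add,
    hE, sum_expCoef_add_expNegCoef]
  push_cast
  congr 1
  ring

theorem LamKer_mul_LKer_eq (ℏ : ℝ) (y w : ℂ) (σ : Fin (m + 1) → ℝ) :
    LamKer ℏ m w x σ * LKer ℏ m y σ z
      = cexp (I / ℏ * (w * ↑(∑ k, x k) - y * ↑(∑ k, z k))) * ∏ k,
          besselKIntegrand (expCoef x z k.castSucc / ℏ) (expNegCoef x z k.castSucc / ℏ)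
            (I * (y - w) / ℏ) (σ k) := by
  have hE : ∑ k, (expCoef x z k.castSucc / ℏ * rexp (σ k)
        + expNegCoef x z k.castSucc / ℏ * rexp (-σ k))
      = (∑ k, (expCoef x z k.castSucc * rexp (σ k)
        + expNegCoef x z k.castSucc * rexp (-σ k))) / ℏ := by
    simp only [Finset.sum_div, add_div, div_mul_eq_mul_div]
  rw [LamKer_eq_exp, LKer_eq_exp, prod_besselKIntegrand, ← Complex.exp_add, ← Complex.exp_add,
    hE, sum_expCoef_castSucc_add_expNegCoef]
  push_cast
  congr 1
  ring

theorem prod_integral_besselKIntegrand_expCoef {ℏ : ℝ} (hℏ : 0 < ℏ) {s : ℂ} (hs : 0 < s.re) :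
    ∏ j, ∫ t, besselKIntegrand (expCoef x z j / ℏ) (expNegCoef x z j / ℏ) s t
      = cexp (s * ↑(∑ k, x k + ∑ k, z k + Real.log ℏ)) * Gamma s * ∏ k : Fin (m + 1),
          ∫ t, besselKIntegrand (expCoef x z k.castSucc / ℏ) (expNegCoef x z k.castSucc / ℏ)
            (-s) t := by
  have hreflect (k : Fin (m + 1)) :
      ∫ t, besselKIntegrand (expCoef x z k.castSucc / ℏ) (expNegCoef x z k.castSucc / ℏ) s t
        = cexp (s * Real.log (expNegCoef x z k.castSucc / expCoef x z k.castSucc))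
          * ∫ t, besselKIntegrand (expCoef x z k.castSucc / ℏ)
              (expNegCoef x z k.castSucc / ℏ) (-s) t := by
    rw [integral_besselKIntegrand_neg (div_pos (expCoef_pos x z _) hℏ)
      (div_pos (expNegCoef_castSucc_pos x z k) hℏ), div_div_div_cancel_right₀ hℏ.ne']
  rw [Fin.prod_univ_castSucc, expNegCoef_last, zero_div,
    integral_besselKIntegrand_zero (div_pos (expCoef_pos x z _) hℏ) hs]
  simp only [hreflect, Finset.prod_mul_distrib, ← Complex.exp_sum, ← Finset.mul_sum,
    ← ofReal_sum, sum_log_expNegCoef_div_expCoef,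
    Real.log_div (expCoef_pos x z _).ne' hℏ.ne']
  have hexp : cexp (s * ↑(∑ k, x k + ∑ k, z k + Real.log ℏ))
      = cexp (s * ↑(∑ k, x k + ∑ k, z k + Real.log (expCoef x z (Fin.last (m + 1)))))
        * cexp (-(s * ↑(Real.log (expCoef x z (Fin.last (m + 1))) - Real.log ℏ))) := by
    rw [← Complex.exp_add]
    push_cast
    ring_nf
  rw [hexp]
  ring

end Coefficients

/-- Exchange relation between `ℒ` and `Λ`: for `Im y > Im w` (here `N - 1 = m + 2`),
the composition `ℒ^{(N-1)}_y · Λ^{(N-1)}_w` is well-defined and equals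
`ℏ^{(i/ℏ)(w-y)} Γ((y-w)/(iℏ)) · Λ^{(N-1)}_w · ℒ^{(N-2)}_y` as integral kernels. -/
theorem L_lam_exchange (ℏ : ℝ) (hℏ : 0 < ℏ) (m : ℕ) (y w : ℂ) (him : w.im < y.im)
    (x : Fin (m + 2) → ℝ) (z : Fin (m + 1) → ℝ) :
    MeasureTheory.Integrable
        (fun τ : Fin (m + 2) → ℝ => LKer ℏ (m + 1) y x τ * LamKer ℏ m w τ z)
    ∧ (∫ τ : Fin (m + 2) → ℝ, LKer ℏ (m + 1) y x τ * LamKer ℏ m w τ z)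
        = (↑ℏ : ℂ) ^ ((Complex.I / ↑ℏ) * (w - y))
          * Complex.Gamma ((y - w) / (Complex.I * ↑ℏ))
          * ∫ τ : Fin (m + 1) → ℝ, LamKer ℏ m w x τ * LKer ℏ m y τ z := by
  have hℏ₀ : (ℏ : ℂ) ≠ 0 := ofReal_ne_zero.mpr hℏ.ne'
  set s : ℂ := I * (w - y) / ℏ with hs_def
  have hs : 0 < s.re := by
    rw [hs_def, div_ofReal_re, I_mul_re, sub_im, neg_sub]
    exact div_pos (sub_pos.mpr him) hℏ
  have hΓ : (y - w) / (I * ℏ) = s := by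
    rw [hs_def, div_eq_div_iff (mul_ne_zero I_ne_zero hℏ₀) hℏ₀]
    linear_combination (ℏ * (y - w)) * I_sq
  have hpow : (ℏ : ℂ) ^ (I / ℏ * (w - y)) = cexp (s * Real.log ℏ) := by
    rw [cpow_def_of_ne_zero hℏ₀, ← ofReal_log hℏ.le, hs_def]
    ring_nf
  simp_rw [LKer_mul_LamKer_eq, LamKer_mul_LKer_eq, show I * (y - w) / ℏ = -s by ring]
  refine ⟨(Integrable.fintype_prod fun j => integrable_besselKIntegrand
    (div_pos (expCoef_pos x z j) hℏ) (div_nonneg (expNegCoef_nonneg x z j) hℏ.le) hs).const_mul _,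
    ?_⟩
  rw [integral_const_mul, integral_const_mul, integral_fintype_prod_volume_eq_prod,
    integral_fintype_prod_volume_eq_prod, prod_integral_besselKIntegrand_expCoef x z hℏ hs, hΓ,
    hpow]
  have hphase : cexp (I / ℏ * (y * ↑(∑ k, x k) - w * ↑(∑ k, z k)))
        * cexp (s * ↑(∑ k, x k + ∑ k, z k + Real.log ℏ))
      = cexp (s * Real.log ℏ) * cexp (I / ℏ * (w * ↑(∑ k, x k) - y * ↑(∑ k, z k))) := by
    rw [← Complex.exp_add, ← Complex.exp_add, hs_def]
    push_cast
    ring_nf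
  linear_combination (Gamma s * ∏ k : Fin (m + 1), ∫ t, besselKIntegrand
    (expCoef x z k.castSucc / ℏ) (expNegCoef x z k.castSucc / ℏ) (-s) t) * hphase
end
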